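/- Let V be a finite-dimensional real vector space and let Ω ⊆ 𝕆 be two nonempty convex open subsets of ℙ(V). Let →𝕆 denote the intersection of all projective hyperplanes of ℙ(V) disjoint from 𝕆, and suppose closure(Ω) ∩ →𝕆 = ∅. Then there is a family (Ω_t)_{t≥0} of properly convex open subsets of 𝕆 such that Ω₀ = Ω and ⋃_{t≥0} Ω_t = 𝕆, with Ω_s ⊆ Ω_t whenever s < t. Furthermore, if the sets 𝕆 and Ω are preserved by a subgroup Γ of PGL(V), then the family can be chosen so that Ω_t is also preserved by Γ for all t ≥ 0. -/

import Mathlib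

open scoped Pointwise
open Projectivization

namespace ProjectiveCombination

noncomputable section

/-- The quotient topology on a projectivization. -/
instance projizationTopology (K W : Type*) [DivisionRing K] [AddCommGroup W]
    [Module K W] [TopologicalSpace W] : TopologicalSpace (Projectivization K W) :=
  inferInstanceAs (TopologicalSpace (Quotient (projectivizationSetoid K W)))

variable (V : Type) [NormedAddCommGroup V] [NormedSpace ℝ V]

/-- The general linear group of `V`, as the units of the algebra of continuous endomorphisms. -/
abbrev GLV := (V →L[ℝ] V)ˣ

theorem GLV.inj (g : GLV V) :
    Function.Injective (((g : V →L[ℝ] V) : V →ₗ[ℝ] V)) := by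
  intro a b hab
  have hab' : (g : V →L[ℝ] V) a = (g : V →L[ℝ] V) b := by simpa using hab
  have h := congrArg (fun z => ((g⁻¹ : GLV V) : V →L[ℝ] V) z) hab'
  simp only [← ContinuousLinearMap.mul_apply] at h
  rw [Units.inv_mul] at h
  simpa using h

theorem GLV.ne_zero (g : GLV V) {v : V} (hv : v ≠ 0) : (g : V →L[ℝ] V) v ≠ 0 := by
  intro h0
  apply hv
  have : (((g : V →L[ℝ] V) : V →ₗ[ℝ] V)) v = (((g : V →L[ℝ] V) : V →ₗ[ℝ] V)) 0 := by
    simpa using h0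
  simpa using GLV.inj V g this

theorem mk_congr {W : Type*} [AddCommGroup W] [Module ℝ W] {v w : W} (h : v = w) (hv : v ≠ 0) :
    Projectivization.mk ℝ v hv = Projectivization.mk ℝ w (h ▸ hv) := by subst h; rfl

/-- The action of `GL(V)` on the projective space of `V`. -/
instance : MulAction (GLV V) (Projectivization ℝ V) where
  smul g x := Projectivization.map (((g : V →L[ℝ] V) : V →ₗ[ℝ] V)) (GLV.inj V g) x
  one_smul x := by
    induction x using Projectivization.ind with
    | h v hv =>
      show Projectivization.map _ _ _ = _
      rw [Projectivization.map_mk]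
      exact mk_congr (by simp) hv |>.symm |>.symm
  mul_smul g h x := by
    induction x using Projectivization.ind with
    | h v hv =>
      show Projectivization.map _ _ _ = Projectivization.map _ _ (Projectivization.map _ _ _)
      rw [Projectivization.map_mk, Projectivization.map_mk, Projectivization.map_mk]
      exact mk_congr (by simp) _

theorem glv_smul_mk (g : GLV V) (v : V) (hv : v ≠ 0) :
    g • Projectivization.mk ℝ v hv
      = Projectivization.mk ℝ ((g : V →L[ℝ] V) v) (GLV.ne_zero V g hv) := rfl

/-- The subgroup of scalar multiples of the identity inside `GL(V)`. -/
def projScalars : Subgroup (GLV V) :=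
  MonoidHom.range (Units.map (algebraMap ℝ (V →L[ℝ] V)).toMonoidHom)

instance : (projScalars V).Normal := by
  constructor
  rintro x ⟨r, rfl⟩ g
  refine ⟨r, Units.ext ?_⟩
  show (algebraMap ℝ (V →L[ℝ] V)) (r : ℝ)
      = ((g : V →L[ℝ] V)) * (algebraMap ℝ (V →L[ℝ] V)) (r : ℝ) * ((g⁻¹ : GLV V) : V →L[ℝ] V)
  rw [← Algebra.commutes ((r : ℝ)) ((g : V →L[ℝ] V)), mul_assoc, Units.mul_inv, mul_one]

/-- The projective general linear group of `V`: the quotient of `GL(V)` by scalars. -/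
abbrev PGL := GLV V ⧸ projScalars V

theorem scalars_act_trivially :
    ∀ x ∈ projScalars V, (MulAction.toPermHom (GLV V) (Projectivization ℝ V)) x = 1 := by
  rintro x ⟨r, rfl⟩
  ext p
  induction p using Projectivization.ind with
  | h v hv =>
    show (Units.map (algebraMap ℝ (V →L[ℝ] V)).toMonoidHom r) • Projectivization.mk ℝ v hv
      = Projectivization.mk ℝ v hv
    rw [glv_smul_mk]
    rw [Projectivization.mk_eq_mk_iff]
    refine ⟨r, ?_⟩
    simp [Algebra.algebraMap_eq_smul_one, Units.smul_def]

/-- The action of `PGL(V)` on the projective space of `V`, via permutations. -/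
def PGLperm : PGL V →* Equiv.Perm (Projectivization ℝ V) :=
  QuotientGroup.lift (projScalars V) (MulAction.toPermHom (GLV V) (Projectivization ℝ V))
    (scalars_act_trivially V)

/-- The action of `PGL(V)` on the projective space of `V`. -/
instance : MulAction (PGL V) (Projectivization ℝ V) :=
  MulAction.compHom _ (PGLperm V)

variable {V}

/-- The canonical lift of a point of projective space into the affine chart determined by a
linear functional `f` (the chart being the complement of the projective hyperplane `ker f`):
the unique lift `v` with `f v = 1`, when the point lies in the chart. -/
def chartLift (f : V →L[ℝ] ℝ) (x : Projectivization ℝ V) : V := (f x.rep)⁻¹ • x.rep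

/-- A subset of projective space is contained in the affine chart determined by `f`. -/
def InChart (f : V →L[ℝ] ℝ) (S : Set (Projectivization ℝ V)) : Prop :=
  ∀ x ∈ S, f x.rep ≠ 0

/-- A subset of projective space is *convex* if it is contained and convex in some affine
chart. -/
def IsConvexSet (S : Set (Projectivization ℝ V)) : Prop :=
  ∃ f : V →L[ℝ] ℝ, InChart f S ∧ Convex ℝ (chartLift f '' S)

/-- A subset of projective space is *properly convex* if it is contained, convex and bounded
in some affine chart. -/
def IsProperlyConvex (S : Set (Projectivization ℝ V)) : Prop :=
  ∃ f : V →L[ℝ] ℝ, InChart f S ∧ Convex ℝ (chartLift f '' S) ∧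
    Bornology.IsBounded (chartLift f '' S)

/-- The convex hull of a subset of projective space: the intersection of all convex subsets
containing it.  For a connected set contained in an affine chart this agrees with the convex
hull taken in any affine chart containing the set. -/
def projHull (X : Set (Projectivization ℝ V)) : Set (Projectivization ℝ V) :=
  ⋂₀ {C | IsConvexSet C ∧ X ⊆ C}

/-- The convex hull of `X` taken within the ambient set `S`. -/
def hullWithin (S X : Set (Projectivization ℝ V)) : Set (Projectivization ℝ V) :=
  ⋂₀ {C | IsConvexSet C ∧ X ⊆ C ∧ C ⊆ S}

/-- The projective hyperplane of `ℙ(V)` corresponding to a point of `ℙ(V*)`. -/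
def hypl (φ : Projectivization ℝ (V →L[ℝ] ℝ)) : Set (Projectivization ℝ V) :=
  {x | φ.rep x.rep = 0}

/-- The dual of a subset `S` of `ℙ(V)`: the set of projective hyperplanes missing the closure
of `S`, viewed as a subset of `ℙ(V*)`. -/
def dualSet (S : Set (Projectivization ℝ V)) : Set (Projectivization ℝ (V →L[ℝ] ℝ)) :=
  {φ | hypl φ ∩ closure S = ∅}

/-- The intersection of all projective hyperplanes of `ℙ(V)` disjoint from `𝕆`
(denoted `→𝕆` in the paper). -/
def dirSpace (𝕆 : Set (Projectivization ℝ V)) : Set (Projectivization ℝ V) :=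
  ⋂₀ {H | ∃ φ : Projectivization ℝ (V →L[ℝ] ℝ), H = hypl φ ∧ hypl φ ∩ 𝕆 = ∅}

/-- The convex open subset `𝒪 × U'` of `ℙ(V)` obtained from a properly convex subset `𝒪`
of `ℙ(U)` (for a decomposition `V = U ⊕ U'`): the projectivization of the set of sums
`u + u'` where `u` spans a line of `𝒪` and `u' ∈ U'`. -/
def fatten (𝒪 : Set (Projectivization ℝ V)) (U' : Submodule ℝ V) :
    Set (Projectivization ℝ V) :=
  {x | ∃ (u u' : V) (hu : u ≠ 0) (huu : u + u' ≠ 0),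
    u' ∈ U' ∧ Projectivization.mk ℝ u hu ∈ 𝒪 ∧ x = Projectivization.mk ℝ (u + u') huu}

/-- A triple `(A, B, C)` of (properly convex open) subsets of `ℙ(V)` is in *occultation
position*. -/
def IsOccultation (A B C : Set (Projectivization ℝ V)) : Prop :=
  (¬ A ⊆ B ∧ ¬ C ⊆ B) ∧ ((A ∩ B).Nonempty ∧ (B ∩ C).Nonempty ∧ A ∩ C = ∅) ∧
    closure (dualSet B) ⊆ dualSet A ∪ dualSet C

/-- A triple `(A, B, C)` of (properly convex open) subsets of `ℙ(V)` is in *weak occultation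
position*. -/
def IsWeakOccultation (A B C : Set (Projectivization ℝ V)) : Prop :=
  (¬ A ⊆ B ∧ ¬ C ⊆ B) ∧ ((A ∩ B).Nonempty ∧ (B ∩ C).Nonempty ∧ A ∩ C = ∅) ∧
    dualSet B ⊆ dualSet A ∪ dualSet C

/-- A nontrivial projective segment in `ℙ(V)`: the image in projective space of a segment
between two linearly independent vectors. -/
def IsProjSegment (s : Set (Projectivization ℝ V)) : Prop :=
  ∃ v w : V, LinearIndependent ℝ ![v, w] ∧
    s = {x | ∃ p ∈ segment ℝ v w, ∃ hp : p ≠ 0, x = Projectivization.mk ℝ p hp}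

/-- `C` has strictly convex nonideal boundary in `Ω`: every nontrivial projective segment
contained in `closure C \ interior C` is contained in `∂Ω`. -/
def StrictlyConvexNonidealBoundaryIn (C Ω : Set (Projectivization ℝ V)) : Prop :=
  ∀ s, IsProjSegment s → s ⊆ closure C \ interior C → s ⊆ frontier Ω

/-- The image in `ℙ(V)` of a linear subspace of `V`. -/
def projSub (W : Submodule ℝ V) : Set (Projectivization ℝ V) := {x | x.rep ∈ W}

section GroupNotions

variable {G : Type} [Group G] [MulAction G (Projectivization ℝ V)]

/-- A subgroup preserves a subset of projective space. -/
def SetPreserved (Γ : Subgroup G) (S : Set (Projectivization ℝ V)) : Prop :=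
  ∀ γ ∈ Γ, γ • S = S

/-- The orbit of a point under a subgroup. -/
def orbitSet (Γ : Subgroup G) (x : Projectivization ℝ V) : Set (Projectivization ℝ V) :=
  {y | ∃ γ ∈ Γ, γ • x = y}

/-- The full orbital limit set of `Γ` in `Ω`: all accumulation points in `∂Ω` of
`Γ`-orbits of points of `Ω`. -/
def limitSet (Γ : Subgroup G) (Ω : Set (Projectivization ℝ V)) : Set (Projectivization ℝ V) :=
  {z | z ∈ closure Ω \ Ω ∧ ∃ x ∈ Ω, z ∈ closure (orbitSet Γ x)}

/-- The convex core of `Γ` in `Ω`: the intersection of `Ω` with the convex hull of the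
closure of the full orbital limit set, taken in the closure of `Ω`. -/
def convexCore (Γ : Subgroup G) (Ω : Set (Projectivization ℝ V)) : Set (Projectivization ℝ V) :=
  Ω ∩ hullWithin (closure Ω) (closure (limitSet Γ Ω))

/-- A set has compact quotient by a subgroup: some compact set has translates covering it. -/
def CompactQuot (Γ : Subgroup G) (C : Set (Projectivization ℝ V)) : Prop :=
  ∃ K : Set (Projectivization ℝ V), IsCompact K ∧ C ⊆ ⋃ γ ∈ Γ, γ • K

/-- A set has compact quotient by a group acting through a representation. -/
def CompactQuotRep {Γ : Type} [Group Γ] (ρ : Γ →* G) (C : Set (Projectivization ℝ V)) : Prop :=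
  ∃ K : Set (Projectivization ℝ V), IsCompact K ∧ C ⊆ ⋃ γ : Γ, ρ γ • K

/-- The action of `Γ` on `Ω` is naively convex cocompact: `Γ` preserves and acts with compact
quotient on some nonempty closed (in `Ω`) convex subset of `Ω`. -/
def ActsNaivelyConvexCocompactlyOn (Γ : Subgroup G) (Ω : Set (Projectivization ℝ V)) : Prop :=
  ∃ C : Set (Projectivization ℝ V), C.Nonempty ∧ C ⊆ Ω ∧ closure C ∩ Ω ⊆ C ∧
    IsConvexSet C ∧ SetPreserved Γ C ∧ CompactQuot Γ C

/-- The action of `Γ` on `Ω` is convex cocompact: moreover the cocompact convex set can be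
taken with closure containing the full orbital limit set. -/
def ActsConvexCocompactlyOn (Γ : Subgroup G) (Ω : Set (Projectivization ℝ V)) : Prop :=
  ∃ C : Set (Projectivization ℝ V), C.Nonempty ∧ C ⊆ Ω ∧ closure C ∩ Ω ⊆ C ∧
    IsConvexSet C ∧ SetPreserved Γ C ∧ CompactQuot Γ C ∧ limitSet Γ Ω ⊆ closure C

variable (V) in
/-- `Γ` is naively convex cocompact in `ℙ(V)`. -/
def NaivelyConvexCocompactIn (Γ : Subgroup G) : Prop :=
  ∃ Ω : Set (Projectivization ℝ V), Ω.Nonempty ∧ IsOpen Ω ∧ IsProperlyConvex Ω ∧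
    SetPreserved Γ Ω ∧ ActsNaivelyConvexCocompactlyOn Γ Ω

variable (V) in
/-- `Γ` is convex cocompact in `ℙ(V)`. -/
def ConvexCocompactIn (Γ : Subgroup G) : Prop :=
  ∃ Ω : Set (Projectivization ℝ V), Ω.Nonempty ∧ IsOpen Ω ∧ IsProperlyConvex Ω ∧
    SetPreserved Γ Ω ∧ ActsConvexCocompactlyOn Γ Ω

/-- The action of `Γ` on `S` is properly discontinuous. -/
def ProperlyDiscontinuousOn (Γ : Subgroup G) (S : Set (Projectivization ℝ V)) : Prop :=
  ∀ K ⊆ S, IsCompact K → {γ : Γ | (((γ : G) • K) ∩ K).Nonempty}.Finite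

/-- `Γ` divides `S`: it preserves `S` and acts properly discontinuously and cocompactly
on `S`. -/
def Divides (Γ : Subgroup G) (S : Set (Projectivization ℝ V)) : Prop :=
  SetPreserved Γ S ∧ ProperlyDiscontinuousOn Γ S ∧ CompactQuot Γ S

end GroupNotions

/-- A representation into `PGL(V)` is discrete and faithful. -/
def DiscreteFaithful {Γ : Type} [Group Γ] (ρ : Γ →* PGL V) : Prop :=
  Function.Injective ρ ∧ DiscreteTopology ↥(MonoidHom.range ρ)

section Amalgam

variable {G : Type} [Group G] (Γ₀ Γ₁ Δ : Subgroup G)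

/-- The two factors of an amalgamated free product, indexed by `Bool`. -/
abbrev ampFam : Bool → Type := fun b => ↥(cond b Γ₁ Γ₀)

/-- The inclusions of the common subgroup `Δ` into the two factors. -/
def ampHoms (h₀ : Δ ≤ Γ₀) (h₁ : Δ ≤ Γ₁) : ∀ b, ↥Δ →* ampFam Γ₀ Γ₁ b := fun b =>
  Subgroup.inclusion (by
    cases b
    · exact h₀
    · exact h₁)

/-- The amalgamated free product `Γ₀ *_Δ Γ₁`, as the pushout of the inclusions
`Δ ↪ Γ₀` and `Δ ↪ Γ₁`. -/
abbrev AmalgamatedProduct (h₀ : Δ ≤ Γ₀) (h₁ : Δ ≤ Γ₁) : Type :=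
  Monoid.PushoutI (ampHoms Γ₀ Γ₁ Δ h₀ h₁)

/-- The representation of the amalgamated free product `Γ₀ *_Δ Γ₁` induced by the
inclusions `Γ₀, Γ₁ ↪ G`. -/
def amalgamRep (h₀ : Δ ≤ Γ₀) (h₁ : Δ ≤ Γ₁) : AmalgamatedProduct Γ₀ Γ₁ Δ h₀ h₁ →* G :=
  Monoid.PushoutI.lift (fun b => (cond b Γ₁ Γ₀).subtype) Δ.subtype
    (by
      intro b
      cases b
      · exact MonoidHom.ext fun x => rfl
      · exact MonoidHom.ext fun x => rfl)

/-- The representation of the free product `Γ₀ * Γ₁` induced by the inclusions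
`Γ₀, Γ₁ ↪ G`. -/
def freeProdRep : Monoid.Coprod ↥Γ₀ ↥Γ₁ →* G := Monoid.Coprod.lift Γ₀.subtype Γ₁.subtype

end Amalgam

end

noncomputable section AuxProof

open Filter Topology

variable {V : Type} [NormedAddCommGroup V] [NormedSpace ℝ V]

theorem mk_smul_eq {v : V} (hv : v ≠ 0) {a : ℝ} (ha : a ≠ 0) (hav : a • v ≠ 0) :
    Projectivization.mk ℝ (a • v) hav = Projectivization.mk ℝ v hv := by
  rw [Projectivization.mk_eq_mk_iff]
  exact ⟨Units.mk0 a ha, by simp [Units.smul_def]⟩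

theorem mk_neg {v : V} (hv : v ≠ 0) (hnv : -v ≠ 0) :
    Projectivization.mk ℝ (-v) hnv = Projectivization.mk ℝ v hv := by
  rw [Projectivization.mk_eq_mk_iff]
  exact ⟨-1, by simp [Units.smul_def]⟩

theorem mk_neg_rep (x : Projectivization ℝ V) (hnv : -x.rep ≠ 0) :
    Projectivization.mk ℝ (-x.rep) hnv = x :=
  (mk_neg (Projectivization.rep_nonzero x) hnv).trans (Projectivization.mk_rep x)

theorem exists_rep_smul {v : V} (hv : v ≠ 0) :
    ∃ a : ℝ, a ≠ 0 ∧ (Projectivization.mk ℝ v hv).rep = a • v := by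
  have h := Projectivization.mk_rep (Projectivization.mk ℝ v hv)
  rw [Projectivization.mk_eq_mk_iff] at h
  obtain ⟨a, ha⟩ := h
  exact ⟨(a : ℝ), a.ne_zero, by rw [← ha]; simp [Units.smul_def]⟩

theorem chartLift_mk (f : V →L[ℝ] ℝ) {v : V} (hv : v ≠ 0) (hfv : f v ≠ 0) :
    chartLift f (Projectivization.mk ℝ v hv) = (f v)⁻¹ • v := by
  obtain ⟨a, ha, hrep⟩ := exists_rep_smul hv
  unfold chartLift
  rw [hrep, map_smul, smul_eq_mul, smul_smul]
  congr 1
  field_simp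

theorem mk_chartLift (f : V →L[ℝ] ℝ) (x : Projectivization ℝ V) (hfr : f x.rep ≠ 0)
    (h : chartLift f x ≠ 0) :
    Projectivization.mk ℝ (chartLift f x) h = x := by
  have : Projectivization.mk ℝ ((f x.rep)⁻¹ • x.rep) h
      = Projectivization.mk ℝ x.rep (Projectivization.rep_nonzero x) :=
    mk_smul_eq (Projectivization.rep_nonzero x) (inv_ne_zero hfr) h
  exact this.trans (Projectivization.mk_rep x)

/-- The cone over a subset of projective space, relative to the chart `f`. -/
def projCone (f : V →L[ℝ] ℝ) (S : Set (Projectivization ℝ V)) : Set V :=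
  {v | 0 < f v ∧ ∃ hv : v ≠ 0, Projectivization.mk ℝ v hv ∈ S}

/-- The image of a set of nonzero vectors in projective space. -/
def coneProj (k : Set V) : Set (Projectivization ℝ V) :=
  {x | ∃ v, ∃ hv : v ≠ 0, v ∈ k ∧ x = Projectivization.mk ℝ v hv}

theorem projCone_smul_mem {f : V →L[ℝ] ℝ} {S : Set (Projectivization ℝ V)} {v : V}
    (hv : v ∈ projCone f S) {a : ℝ} (ha : 0 < a) : a • v ∈ projCone f S := by
  obtain ⟨h1, hne, h2⟩ := hv
  have hane : a • v ≠ 0 := smul_ne_zero ha.ne' hne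
  refine ⟨by rw [map_smul, smul_eq_mul]; exact mul_pos ha h1, hane, ?_⟩
  rw [mk_smul_eq hne ha.ne' hane]
  exact h2

theorem projCone_ne_zero {f : V →L[ℝ] ℝ} {S : Set (Projectivization ℝ V)} {v : V}
    (hv : v ∈ projCone f S) : v ≠ 0 := hv.2.1

theorem coneProj_mono {k k' : Set V} (h : k ⊆ k') : coneProj k ⊆ coneProj k' := by
  rintro x ⟨v, hv, hvk, rfl⟩
  exact ⟨v, hv, h hvk, rfl⟩

theorem mem_coneProj_of_mem {k : Set V} {v : V} (hv : v ≠ 0) (h : v ∈ k) :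
    Projectivization.mk ℝ v hv ∈ coneProj k := ⟨v, hv, h, rfl⟩

theorem coneProj_neg_smul {k : Set V} {v : V} (hv : v ≠ 0) {a : ℝ} (ha : a ≠ 0)
    (h : a • v ∈ k) : Projectivization.mk ℝ v hv ∈ coneProj k :=
  ⟨a • v, smul_ne_zero ha hv, h, (mk_smul_eq hv ha _).symm⟩

theorem coneProj_projCone (f : V →L[ℝ] ℝ) (S : Set (Projectivization ℝ V))
    (hchart : InChart f S) : coneProj (projCone f S) = S := by
  ext x
  constructor
  · rintro ⟨v, hv, ⟨_, hv', hmem⟩, rfl⟩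
    exact hmem
  · intro hx
    have hfr : f x.rep ≠ 0 := hchart x hx
    rcases lt_or_gt_of_ne hfr with hneg | hpos
    · have hne : -x.rep ≠ 0 := neg_ne_zero.2 (Projectivization.rep_nonzero x)
      have hmkeq : Projectivization.mk ℝ (-x.rep) hne = x := mk_neg_rep x hne
      exact ⟨-x.rep, hne, ⟨by simpa using hneg, hne, by rw [hmkeq]; exact hx⟩, hmkeq.symm⟩
    · refine ⟨x.rep, Projectivization.rep_nonzero x, ⟨hpos, Projectivization.rep_nonzero x, ?_⟩, ?_⟩
      · rw [Projectivization.mk_rep]; exact hx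
      · exact (Projectivization.mk_rep x).symm

theorem projCone_convex (f : V →L[ℝ] ℝ) (S : Set (Projectivization ℝ V))
    (hchart : InChart f S) (hconv : Convex ℝ (chartLift f '' S)) :
    Convex ℝ (projCone f S) := by
  rintro v ⟨hfv, hvne, hvS⟩ w ⟨hfw, hwne, hwS⟩ a b ha hb hab
  set z := a • v + b • w with hz_def
  have hfz : 0 < f z := by
    have : f z = a * f v + b * f w := by simp [hz_def, map_add, map_smul, smul_eq_mul]
    rw [this]
    rcases ha.lt_or_eq with h | h
    · exact add_pos_of_pos_of_nonneg (mul_pos h hfv) (mul_nonneg hb hfw.le)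
    · have hb1 : b = 1 := by linarith
      simp [← h, hb1, hfw]
  have hz : z ≠ 0 := by
    intro h0
    rw [h0] at hfz
    simp at hfz
  have hvim : (f v)⁻¹ • v ∈ chartLift f '' S :=
    ⟨_, hvS, chartLift_mk f hvne hfv.ne'⟩
  have hwim : (f w)⁻¹ • w ∈ chartLift f '' S :=
    ⟨_, hwS, chartLift_mk f hwne hfw.ne'⟩
  have hfzeq : f z = a * f v + b * f w := by simp [hz_def, map_add, map_smul, smul_eq_mul]
  set c := (a * f v) / f z with hc_def
  set d := (b * f w) / f z with hd_def
  have hc : 0 ≤ c := div_nonneg (mul_nonneg ha hfv.le) hfz.le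
  have hd : 0 ≤ d := div_nonneg (mul_nonneg hb hfw.le) hfz.le
  have hcd : c + d = 1 := by
    rw [hc_def, hd_def, ← add_div, hfzeq]
    exact div_self (by rw [← hfzeq]; exact hfz.ne')
  have hcomb : c • ((f v)⁻¹ • v) + d • ((f w)⁻¹ • w) = (f z)⁻¹ • z := by
    rw [hz_def, smul_add, smul_smul, smul_smul, smul_smul, smul_smul]
    congr 1
    · congr 1
      rw [hc_def, div_mul_eq_mul_div, mul_assoc, mul_inv_cancel₀ hfv.ne', mul_one,
        div_eq_inv_mul]
    · congr 1
      rw [hd_def, div_mul_eq_mul_div, mul_assoc, mul_inv_cancel₀ hfw.ne', mul_one,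
        div_eq_inv_mul]
  have hmem := hconv hvim hwim hc hd hcd
  rw [hcomb] at hmem
  obtain ⟨y, hyS, hy⟩ := hmem
  have hfzinv : (f z)⁻¹ • z ≠ 0 := smul_ne_zero (inv_ne_zero hfz.ne') hz
  have h1 : Projectivization.mk ℝ (chartLift f y) (hy ▸ hfzinv) = y :=
    mk_chartLift f y (hchart y hyS) _
  have h2 : Projectivization.mk ℝ ((f z)⁻¹ • z) hfzinv = Projectivization.mk ℝ z hz :=
    mk_smul_eq hz (inv_ne_zero hfz.ne') hfzinv
  refine ⟨hfz, hz, ?_⟩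
  have : Projectivization.mk ℝ z hz = y := by
    rw [← h2, ← h1]
    congr 1
    exact hy.symm
  rw [this]
  exact hyS

theorem continuous_Pmk : Continuous (fun w : {v : V // v ≠ 0} =>
    Projectivization.mk ℝ w.1 w.2) :=
  continuous_quotient_mk'

theorem isQuotientMap_Pmk : Topology.IsQuotientMap (fun w : {v : V // v ≠ 0} =>
    Projectivization.mk ℝ w.1 w.2) :=
  isQuotientMap_quotient_mk'

theorem isOpen_coneProj {k : Set V} (hko : IsOpen k)
    (hcone : ∀ a : ℝ, 0 < a → ∀ v ∈ k, a • v ∈ k) : IsOpen (coneProj k) := by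
  rw [← isQuotientMap_Pmk.isOpen_preimage]
  have hpre : (fun w : {v : V // v ≠ 0} => Projectivization.mk ℝ w.1 w.2) ⁻¹' coneProj k
      = Subtype.val ⁻¹' (k ∪ (-k)) := by
    ext w
    constructor
    · rintro ⟨v, hv, hvk, heq⟩
      rw [Projectivization.mk_eq_mk_iff] at heq
      obtain ⟨a, ha⟩ := heq
      rcases lt_or_gt_of_ne a.ne_zero with hneg | hpos
      · right
        have : -w.1 = (-(a : ℝ)) • v := by rw [← ha]; simp [Units.smul_def]
        have hmem : -w.1 ∈ k := by rw [this]; exact hcone _ (by simpa using hneg) v hvk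
        simpa using hmem
      · left
        have : w.1 = (a : ℝ) • v := by rw [← ha]; simp [Units.smul_def]
        rw [this]
        exact hcone _ hpos v hvk
    · rintro (h | h)
      · exact ⟨w.1, w.2, h, rfl⟩
      · refine ⟨-w.1, by simpa using w.2, by simpa using h, (mk_neg w.2 (by simpa using w.2)).symm⟩
  rw [hpre]
  exact (hko.union hko.neg).preimage continuous_subtype_val

theorem isOpen_projCone (f : V →L[ℝ] ℝ) {S : Set (Projectivization ℝ V)} (hS : IsOpen S) :
    IsOpen (projCone f S) := by
  have hA : IsOpen {v : V | ∃ hv : v ≠ 0, Projectivization.mk ℝ v hv ∈ S} := by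
    have h1 : IsOpen {v : V | v ≠ 0} := isOpen_ne
    have himg : {v : V | ∃ hv : v ≠ 0, Projectivization.mk ℝ v hv ∈ S}
        = Subtype.val '' ((fun w : {v : V // v ≠ 0} => Projectivization.mk ℝ w.1 w.2) ⁻¹' S) := by
      ext v
      constructor
      · rintro ⟨hv, hmem⟩
        exact ⟨⟨v, hv⟩, hmem, rfl⟩
      · rintro ⟨⟨v', hv'⟩, hmem, rfl⟩
        exact ⟨hv', hmem⟩
    rw [himg]
    exact h1.isOpenMap_subtype_val _ (continuous_Pmk.isOpen_preimage _ hS)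
  have heq : projCone f S = f ⁻¹' (Set.Ioi 0) ∩ {v : V | ∃ hv : v ≠ 0, Projectivization.mk ℝ v hv ∈ S} := rfl
  rw [heq]
  exact (isOpen_Ioi.preimage f.continuous).inter hA

theorem mem_closure_coneProj {k : Set V} {S : Set (Projectivization ℝ V)}
    (hsub : coneProj k ⊆ S) (hk0 : (0:V) ∉ k) {v : V} (hv : v ≠ 0)
    (hcl : v ∈ closure k) : Projectivization.mk ℝ v hv ∈ closure S := by
  rw [mem_closure_iff_seq_limit] at hcl
  obtain ⟨u, hu, hulim⟩ := hcl
  have hune : ∀ n, u n ≠ 0 := fun n h => hk0 (h ▸ hu n)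
  have htend : Filter.Tendsto (fun n => Projectivization.mk ℝ (u n) (hune n)) Filter.atTop
      (𝓝 (Projectivization.mk ℝ v hv)) := by
    have h1 : Filter.Tendsto (fun n => (⟨u n, hune n⟩ : {v : V // v ≠ 0})) Filter.atTop
        (𝓝 (⟨v, hv⟩ : {v : V // v ≠ 0})) := tendsto_subtype_rng.2 hulim
    exact (continuous_Pmk.tendsto _).comp h1
  exact mem_closure_of_tendsto htend
    (Filter.Eventually.of_forall fun n => hsub (mem_coneProj_of_mem (hune n) (hu n)))

section FinDim

variable [FiniteDimensional ℝ V]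

theorem cone_dual_exists {C₁ C₂ : Set V}
    (hC₂conv : Convex ℝ C₂) (hC₂closed : IsClosed C₂)
    (hC₂cone : ∀ a : ℝ, 0 < a → ∀ v ∈ C₂, a • v ∈ C₂) (h0 : (0:V) ∈ C₂)
    (hsub : C₁ ⊆ C₂) (hC₁closed : IsClosed C₁)
    (hC₁cone : ∀ a : ℝ, 0 < a → ∀ v ∈ C₁, a • v ∈ C₁)
    (hsal : ∀ v ∈ C₁, -v ∈ C₂ → v = 0) :
    ∃ F : V →L[ℝ] ℝ, (∀ v ∈ C₂, 0 ≤ F v) ∧ (∀ v ∈ C₁, v ≠ 0 → 0 < F v) := by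
  have hpt : ∀ z : V, z ∉ C₂ → ∃ G : V →L[ℝ] ℝ, (∀ w ∈ C₂, 0 ≤ G w) ∧ G z < 0 := by
    intro z hz
    obtain ⟨f, u, hfu, huz⟩ := geometric_hahn_banach_closed_point hC₂conv hC₂closed hz
    have hu0 : 0 < u := by simpa using hfu 0 h0
    refine ⟨-f, ?_, ?_⟩
    · intro w hw
      by_contra hneg
      push_neg at hneg
      have hfw : 0 < f w := by
        have : -(f w) < 0 := by simpa using hneg
        linarith
      have hs : 0 < (u + 1) / f w := div_pos (by linarith) hfw
      have hcontra := hfu _ (hC₂cone _ hs w hw)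
      rw [map_smul, smul_eq_mul, div_mul_cancel₀ _ hfw.ne'] at hcontra
      linarith
    · have : 0 < f z := lt_trans hu0 huz
      simpa using this
  set S₀ := C₁ ∩ Metric.sphere (0:V) 1 with hS₀def
  have hS₀cpt : IsCompact S₀ := (isCompact_sphere 0 1).inter_left hC₁closed
  have hGs : ∀ w : S₀, ∃ G : V →L[ℝ] ℝ, (∀ x ∈ C₂, 0 ≤ G x) ∧ 0 < G w.1 := by
    rintro ⟨w, hw₁, hw₂⟩
    have hwne : w ≠ 0 := by
      intro h
      rw [h, mem_sphere_zero_iff_norm] at hw₂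
      simp at hw₂
    have hnot : -w ∉ C₂ := fun hmem => hwne (hsal w hw₁ hmem)
    obtain ⟨G, hG1, hG2⟩ := hpt _ hnot
    exact ⟨G, hG1, by simpa using hG2⟩
  choose G hG1 hG2 using hGs
  have hcover : S₀ ⊆ ⋃ w : S₀, {x | 0 < G w x} := fun w hw =>
    Set.mem_iUnion.2 ⟨⟨w, hw⟩, hG2 ⟨w, hw⟩⟩
  obtain ⟨t, ht⟩ := hS₀cpt.elim_finite_subcover (fun w : S₀ => {x | 0 < G w x})
    (fun w => isOpen_lt continuous_const (G w).continuous) hcover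
  refine ⟨∑ w ∈ t, G w, ?_, ?_⟩
  · intro v hv
    simp only [ContinuousLinearMap.coe_sum', Finset.sum_apply]
    exact Finset.sum_nonneg fun w _ => hG1 w v hv
  · intro v hv hvne
    have hnv : 0 < ‖v‖⁻¹ := inv_pos.2 (norm_pos_iff.2 hvne)
    have hv' : ‖v‖⁻¹ • v ∈ S₀ := by
      refine ⟨hC₁cone _ hnv v hv, ?_⟩
      rw [mem_sphere_zero_iff_norm, norm_smul, norm_inv, norm_norm,
        inv_mul_cancel₀ (norm_ne_zero_iff.2 hvne)]
    obtain ⟨w, hwt, hw⟩ := Set.mem_iUnion₂.1 (ht hv')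
    have hpos : 0 < (∑ w ∈ t, G w) (‖v‖⁻¹ • v) := by
      simp only [ContinuousLinearMap.coe_sum', Finset.sum_apply]
      exact Finset.sum_pos' (fun i _ => hG1 i _ (hsub hv'.1)) ⟨w, hwt, hw⟩
    rw [map_smul, smul_eq_mul] at hpos
    nlinarith

theorem cone_dual_norm_bound {C : Set V} (hCclosed : IsClosed C)
    (hCcone : ∀ a : ℝ, 0 < a → ∀ v ∈ C, a • v ∈ C) (F : V →L[ℝ] ℝ)
    (hF : ∀ v ∈ C, v ≠ 0 → 0 < F v) :
    ∃ m : ℝ, 0 < m ∧ ∀ v ∈ C, m * ‖v‖ ≤ F v := by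
  by_cases hne : (C ∩ Metric.sphere (0:V) 1).Nonempty
  · obtain ⟨w₀, hw₀, hmin⟩ :=
      ((isCompact_sphere (0:V) 1).inter_left hCclosed).exists_isMinOn hne F.continuous.continuousOn
    have hw₀ne : w₀ ≠ 0 := by
      intro h
      have := hw₀.2
      rw [h, mem_sphere_zero_iff_norm] at this
      simp at this
    refine ⟨F w₀, hF _ hw₀.1 hw₀ne, ?_⟩
    intro v hv
    rcases eq_or_ne v 0 with rfl | hvne
    · simp
    · have hnv : 0 < ‖v‖⁻¹ := inv_pos.2 (norm_pos_iff.2 hvne)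
      have hv' : ‖v‖⁻¹ • v ∈ C ∩ Metric.sphere (0:V) 1 := by
        refine ⟨hCcone _ hnv v hv, ?_⟩
        rw [mem_sphere_zero_iff_norm, norm_smul, norm_inv, norm_norm,
          inv_mul_cancel₀ (norm_ne_zero_iff.2 hvne)]
      have hle : F w₀ ≤ F (‖v‖⁻¹ • v) := hmin hv'
      rw [map_smul, smul_eq_mul] at hle
      have hnorm : 0 < ‖v‖ := norm_pos_iff.2 hvne
      rw [mul_comm]
      calc ‖v‖ * F w₀ ≤ ‖v‖ * (‖v‖⁻¹ * F v) := by
            exact mul_le_mul_of_nonneg_left hle hnorm.le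
      _ = F v := by field_simp
  · refine ⟨1, one_pos, ?_⟩
    intro v hv
    rcases eq_or_ne v 0 with rfl | hvne
    · simp
    · exfalso
      apply hne
      have hnv : 0 < ‖v‖⁻¹ := inv_pos.2 (norm_pos_iff.2 hvne)
      refine ⟨‖v‖⁻¹ • v, hCcone _ hnv v hv, ?_⟩
      rw [mem_sphere_zero_iff_norm, norm_smul, norm_inv, norm_norm,
        inv_mul_cancel₀ (norm_ne_zero_iff.2 hvne)]

theorem properlyConvex_of_cone {k : Set V}
    (hconv : Convex ℝ k) (hcone : ∀ a : ℝ, 0 < a → ∀ v ∈ k, a • v ∈ k)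
    (hsal : ∀ v ∈ closure k, -v ∈ closure k → v = 0) :
    IsProperlyConvex (coneProj k) := by
  rcases Set.eq_empty_or_nonempty k with rfl | hne
  · have hempty : coneProj (∅ : Set V) = ∅ := by
      ext x
      simp [coneProj]
    rw [hempty]
    exact ⟨0, fun x hx => absurd hx (Set.notMem_empty x), by simp [convex_empty],
      by simp [Bornology.isBounded_empty]⟩
  · have hclcone : ∀ a : ℝ, 0 < a → ∀ v ∈ closure k, a • v ∈ closure k := by
      intro a ha v hv
      have hmap := image_closure_subset_closure_image (f := fun x : V => a • x)
        (continuous_const_smul a) (s := k)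
      have h2 : a • v ∈ closure ((fun x : V => a • x) '' k) := hmap ⟨v, hv, rfl⟩
      refine closure_mono ?_ h2
      rintro x ⟨y, hy, rfl⟩
      exact hcone a ha y hy
    have h0cl : (0:V) ∈ closure k := by
      obtain ⟨v, hv⟩ := hne
      have htend : Filter.Tendsto (fun n : ℕ => (1/((n:ℝ)+1)) • v) Filter.atTop (𝓝 (0:V)) := by
        simpa using (tendsto_one_div_add_atTop_nhds_zero_nat : Filter.Tendsto (fun n : ℕ => 1 / ((n : ℝ) + 1)) Filter.atTop (𝓝 0)).smul_const v
      exact mem_closure_of_tendsto htend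
        (Filter.Eventually.of_forall fun n => hcone _ (by positivity) v hv)
    obtain ⟨F, hF0, hFpos⟩ := cone_dual_exists hconv.closure isClosed_closure hclcone h0cl
      (subset_refl (closure k)) isClosed_closure hclcone hsal
    obtain ⟨m, hm, hmF⟩ := cone_dual_norm_bound isClosed_closure hclcone F hFpos
    have himg : chartLift F '' coneProj k = {v | v ∈ k ∧ F v = 1} := by
      ext w
      constructor
      · rintro ⟨x, ⟨v, hv, hvk, rfl⟩, rfl⟩
        have hFv : 0 < F v := hFpos v (subset_closure hvk) hv
        rw [chartLift_mk F hv hFv.ne']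
        constructor
        · exact hcone _ (inv_pos.2 hFv) v hvk
        · rw [map_smul, smul_eq_mul, inv_mul_cancel₀ hFv.ne']
      · rintro ⟨hwk, hw1⟩
        have hwne : w ≠ 0 := by
          intro h
          rw [h] at hw1
          simp at hw1
        refine ⟨Projectivization.mk ℝ w hwne, mem_coneProj_of_mem hwne hwk, ?_⟩
        rw [chartLift_mk F hwne (by rw [hw1]; norm_num), hw1]
        simp
    refine ⟨F, ?_, ?_, ?_⟩
    · rintro x ⟨v, hv, hvk, rfl⟩
      obtain ⟨a, ha, hrep⟩ := exists_rep_smul hv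
      rw [hrep, map_smul, smul_eq_mul]
      exact mul_ne_zero ha (hFpos v (subset_closure hvk) hv).ne'
    · rw [himg]
      have heq2 : {v | v ∈ k ∧ F v = 1} = k ∩ {v : V | (fun w => F w) v = (1:ℝ)} := rfl
      rw [heq2]
      exact hconv.inter (convex_hyperplane ⟨fun x y => map_add F x y, fun c x => by simp⟩ 1)
    · rw [himg]
      apply (Metric.isBounded_closedBall (x := (0:V)) (r := m⁻¹)).subset
      rintro v ⟨hvk, hv1⟩
      rw [Metric.mem_closedBall, dist_zero_right]
      have hb := hmF v (subset_closure hvk)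
      rw [hv1] at hb
      have hfin := mul_le_mul_of_nonneg_left hb (inv_pos.2 hm).le
      rw [← mul_assoc, inv_mul_cancel₀ hm.ne', one_mul, mul_one] at hfin
      exact hfin

end FinDim


theorem sign_const {A : Set V} (hA : Convex ℝ A) (g : V →L[ℝ] ℝ)
    (hg : ∀ v ∈ A, g v ≠ 0) {a b : V} (ha : a ∈ A) (hb : b ∈ A) (hpos : 0 < g a) :
    0 < g b := by
  by_contra hneg
  push_neg at hneg
  have hbneg : g b < 0 := lt_of_le_of_ne hneg (hg b hb)
  set h : ℝ → ℝ := fun t => g ((1 - t) • a + t • b) with hh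
  have hcont : ContinuousOn h (Set.Icc 0 1) := by
    apply Continuous.continuousOn
    fun_prop
  have h0 : h 0 = g a := by simp [hh]
  have h1 : h 1 = g b := by simp [hh]
  have hmem0 : (0:ℝ) ∈ Set.Icc (h 1) (h 0) := by
    rw [h0, h1]
    exact ⟨hbneg.le, hpos.le⟩
  obtain ⟨t, ht, hht⟩ := intermediate_value_Icc' (by norm_num : (0:ℝ) ≤ 1) hcont hmem0
  have hmem : (1 - t) • a + t • b ∈ A :=
    hA ha hb (by linarith [ht.2]) ht.1 (by ring)
  exact hg _ hmem hht

theorem bridge_salient {f : V →L[ℝ] ℝ} {Ω 𝕆 : Set (Projectivization ℝ V)}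
    (hchartΩ : InChart f Ω)
    (hKconv : Convex ℝ (projCone f 𝕆))
    (hsubk : projCone f Ω ⊆ projCone f 𝕆)
    (hKne : (projCone f 𝕆).Nonempty)
    (hdisj : closure Ω ∩ dirSpace 𝕆 = ∅) :
    ∀ v ∈ closure (projCone f Ω), -v ∈ closure (projCone f 𝕆) → v = 0 := by
  intro v hvk hvK
  by_contra hvne0
  have hB1 : ∀ φ : Projectivization ℝ (V →L[ℝ] ℝ), hypl φ ∩ 𝕆 = ∅ → φ.rep v = 0 := by
    intro φ hφ
    have hψne : ∀ w ∈ projCone f 𝕆, φ.rep w ≠ 0 := by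
      rintro w ⟨hfw, hwne, hwmem⟩ h0
      obtain ⟨a, ha, hr⟩ := exists_rep_smul hwne
      have hmem : Projectivization.mk ℝ w hwne ∈ hypl φ ∩ 𝕆 := by
        refine ⟨?_, hwmem⟩
        show φ.rep (Projectivization.mk ℝ w hwne).rep = 0
        rw [hr, map_smul, smul_eq_mul, h0, mul_zero]
      rw [hφ] at hmem
      exact hmem
    obtain ⟨w₀, hw₀⟩ := hKne
    have hvK' : v ∈ closure (projCone f 𝕆) := closure_mono hsubk hvk
    rcases lt_or_gt_of_ne (hψne w₀ hw₀) with hneg | hpos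
    · have hall : ∀ w ∈ projCone f 𝕆, 0 ≤ (-φ.rep) w := by
        intro w hw
        exact (sign_const hKconv (-φ.rep) (fun x hx => by simpa using hψne x hx) hw₀ hw
          (by simpa using hneg.le.lt_of_ne (hψne w₀ hw₀))).le
      have hcl : closure (projCone f 𝕆) ⊆ {w | 0 ≤ (-φ.rep) w} :=
        closure_minimal hall (isClosed_le continuous_const (-φ.rep).continuous)
      have h1 := hcl hvK'
      have h2 := hcl hvK
      simp only [Set.mem_setOf_eq, ContinuousLinearMap.neg_apply, map_neg] at h1 h2
      linarith
    · have hall : ∀ w ∈ projCone f 𝕆, 0 ≤ φ.rep w := by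
        intro w hw
        exact (sign_const hKconv φ.rep hψne hw₀ hw hpos).le
      have hcl : closure (projCone f 𝕆) ⊆ {w | 0 ≤ φ.rep w} :=
        closure_minimal hall (isClosed_le continuous_const φ.rep.continuous)
      have h1 := hcl hvK'
      have h2 := hcl hvK
      simp only [Set.mem_setOf_eq, map_neg] at h1 h2
      linarith
  have hk0 : (0:V) ∉ projCone f Ω := fun h => by simpa using h.1
  have hxcl : Projectivization.mk ℝ v hvne0 ∈ closure Ω :=
    mem_closure_coneProj (coneProj_projCone f Ω hchartΩ).le hk0 hvne0 hvk
  have hxdir : Projectivization.mk ℝ v hvne0 ∈ dirSpace 𝕆 := by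
    apply Set.mem_sInter.2
    rintro H ⟨φ, rfl, hφ⟩
    show φ.rep (Projectivization.mk ℝ v hvne0).rep = 0
    obtain ⟨a, ha, hr⟩ := exists_rep_smul hvne0
    rw [hr, map_smul, smul_eq_mul, hB1 φ hφ, mul_zero]
  exact Set.eq_empty_iff_forall_notMem.1 hdisj (Projectivization.mk ℝ v hvne0) ⟨hxcl, hxdir⟩

/-- The `c`-thickening of the cone `k` inside the cone `K`. -/
def coneThick (k K : Set V) (c : ℝ) : Set V :=
  {x | ∃ p ∈ k, ∃ q ∈ k, x = p - q ∧ p - c • q ∈ K}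

theorem coneThick_convex {k K : Set V} {c : ℝ} (hk : Convex ℝ k) (hK : Convex ℝ K) :
    Convex ℝ (coneThick k K c) := by
  rintro x₁ ⟨p₁, hp₁, q₁, hq₁, rfl, hy₁⟩ x₂ ⟨p₂, hp₂, q₂, hq₂, rfl, hy₂⟩ a b ha hb hab
  refine ⟨a • p₁ + b • p₂, hk hp₁ hp₂ ha hb hab, a • q₁ + b • q₂, hk hq₁ hq₂ ha hb hab, ?_, ?_⟩
  · module
  · have hmem := hK hy₁ hy₂ ha hb hab
    have heq : a • (p₁ - c • q₁) + b • (p₂ - c • q₂)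
        = a • p₁ + b • p₂ - c • (a • q₁ + b • q₂) := by module
    rwa [heq] at hmem

theorem coneThick_smul {k K : Set V} {c : ℝ}
    (hkcone : ∀ a : ℝ, 0 < a → ∀ v ∈ k, a • v ∈ k)
    (hKcone : ∀ a : ℝ, 0 < a → ∀ v ∈ K, a • v ∈ K)
    {a : ℝ} (ha : 0 < a) {x : V} (hx : x ∈ coneThick k K c) : a • x ∈ coneThick k K c := by
  obtain ⟨p, hp, q, hq, rfl, hy⟩ := hx
  refine ⟨a • p, hkcone a ha p hp, a • q, hkcone a ha q hq, ?_, ?_⟩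
  · module
  · have := hKcone a ha _ hy
    have heq : a • (p - c • q) = a • p - c • (a • q) := by module
    rwa [heq] at this

theorem coneThick_subset {k K : Set V} {c : ℝ} (hc : 1 < c) (hK : Convex ℝ K)
    (hsub : k ⊆ K) : coneThick k K c ⊆ K := by
  rintro x ⟨p, hp, q, hq, rfl, hy⟩
  have h1 : (0:ℝ) ≤ (c - 1) / c := div_nonneg (by linarith) (by linarith)
  have h2 : (0:ℝ) ≤ 1 / c := div_nonneg zero_le_one (by linarith)
  have h3 : (c - 1) / c + 1 / c = 1 := by field_simp; ring
  have hmem := hK (hsub hp) hy h1 h2 h3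
  have heq : ((c - 1) / c) • p + (1 / c) • (p - c • q) = p - q := by
    have hcne : c ≠ 0 := by linarith
    rw [smul_sub, ← add_sub_assoc, ← add_smul, ← add_div, sub_add_cancel,
      div_self hcne, one_smul, smul_smul, one_div, inv_mul_cancel₀ hcne, one_smul]
  rwa [heq] at hmem

theorem subset_coneThick {k K : Set V} {c : ℝ} (hc : 1 < c)
    (hkcone : ∀ a : ℝ, 0 < a → ∀ v ∈ k, a • v ∈ k) (hsub : k ⊆ K) :
    k ⊆ coneThick k K c := by
  intro v hv
  set ε := 1 / (2 * (c - 1)) with hε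
  have hc1 : c - 1 ≠ 0 := by linarith
  have hεpos : 0 < ε := by
    rw [hε]
    exact div_pos one_pos (by linarith)
  refine ⟨(1 + ε) • v, hkcone _ (by linarith) v hv, ε • v, hkcone _ hεpos v hv, ?_, ?_⟩
  · rw [← sub_smul]
    norm_num
  · have heq : (1 + ε) • v - c • ε • v = (1 - ε * (c - 1)) • v := by
      rw [smul_smul, ← sub_smul]
      ring_nf
    rw [heq]
    have hhalf : 1 - ε * (c - 1) = 1 / 2 := by
      rw [hε]
      field_simp [hc1]
      ring
    rw [hhalf]
    exact hsub (hkcone _ (by norm_num) v hv)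

theorem coneThick_mono {k K : Set V} {c c' : ℝ} (hc' : 1 < c') (hcc : c' ≤ c)
    (hK : Convex ℝ K) (hsub : k ⊆ K) :
    coneThick k K c ⊆ coneThick k K c' := by
  have hc : 1 < c := lt_of_lt_of_le hc' hcc
  rintro x hx
  obtain ⟨p, hp, q, hq, rfl, hy⟩ := hx
  have hxK : p - q ∈ K := coneThick_subset hc hK hsub ⟨p, hp, q, hq, rfl, hy⟩
  set α := (c - c') / (c - 1) with hα
  have hα0 : 0 ≤ α := div_nonneg (by linarith) (by linarith)
  have hα1 : α ≤ 1 := by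
    rw [hα, div_le_one (by linarith)]
    linarith
  refine ⟨p, hp, q, hq, rfl, ?_⟩
  have hmem := hK hxK hy hα0 (by linarith : (0:ℝ) ≤ 1 - α) (by ring : α + (1 - α) = 1)
  have heq : α • (p - q) + (1 - α) • (p - c • q) = p - c' • q := by
    have h1 : α + (1 - α) * c = c' := by
      rw [hα]
      have hc1 : c - 1 ≠ 0 := by linarith
      field_simp [hc1]
      ring
    have h2 : p - c' • q = p - (α + (1 - α) * c) • q := by rw [h1]
    rw [h2]
    module
  rwa [heq] at hmem

theorem coneThick_cover {k K : Set V} (hkne : k.Nonempty) (hkopen : IsOpen k)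
    (hKopen : IsOpen K)
    (hkcone : ∀ a : ℝ, 0 < a → ∀ v ∈ k, a • v ∈ k) :
    ∀ v ∈ K, ∃ c : ℝ, 1 < c ∧ v ∈ coneThick k K c := by
  intro v hv
  obtain ⟨a, ha⟩ := hkne
  obtain ⟨δ, hδ, hball⟩ := Metric.isOpen_iff.1 hkopen a ha
  set s := δ / (2 * (‖v‖ + 1)) with hs
  have hspos : 0 < s := by
    rw [hs]
    positivity
  have hsv : a + s • v ∈ k := by
    apply hball
    rw [Metric.mem_ball, dist_self_add_left, norm_smul, Real.norm_eq_abs, abs_of_pos hspos, hs]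
    calc δ / (2 * (‖v‖ + 1)) * ‖v‖ < δ / (2 * (‖v‖ + 1)) * (‖v‖ + 1) := by
          apply mul_lt_mul_of_pos_left (by linarith) (by positivity)
    _ = δ / 2 := by field_simp
    _ < δ := by linarith
  set q := s⁻¹ • a with hq
  have hqk : q ∈ k := hkcone _ (inv_pos.2 hspos) a ha
  have hpk : v + q ∈ k := by
    have := hkcone _ (inv_pos.2 hspos) _ hsv
    have heq : s⁻¹ • (a + s • v) = v + q := by
      rw [hq, smul_add, smul_smul, inv_mul_cancel₀ hspos.ne', one_smul, add_comm]
    rwa [heq] at this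
  obtain ⟨δ', hδ', hball'⟩ := Metric.isOpen_iff.1 hKopen v hv
  set ε := δ' / (2 * (‖q‖ + 1)) with hε
  have hεpos : 0 < ε := by
    rw [hε]
    positivity
  refine ⟨1 + ε, by linarith, v + q, hpk, q, hqk, by abel, ?_⟩
  have heq : v + q - (1 + ε) • q = v - ε • q := by module
  rw [heq]
  apply hball'
  have hdist : dist (v - ε • q) v = ‖ε • q‖ := by
    rw [dist_eq_norm, show v - ε • q - v = -(ε • q) by abel, norm_neg]
  rw [Metric.mem_ball, hdist, norm_smul, Real.norm_eq_abs, abs_of_pos hεpos]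
  calc ε * ‖q‖ ≤ ε * (‖q‖ + 1) := by nlinarith [hεpos]
  _ = δ' / 2 := by rw [hε]; field_simp
  _ < δ' := by linarith

theorem coneThick_salient {k K : Set V} {c : ℝ} (hc : 1 < c)
    (hkadd : ∀ p ∈ k, ∀ q ∈ k, p + q ∈ k)
    (hKadd : ∀ p ∈ K, ∀ q ∈ K, p + q ∈ K)
    (hsub : k ⊆ K)
    (F : V →L[ℝ] ℝ) (hF0 : ∀ v ∈ closure K, 0 ≤ F v)
    (m : ℝ) (hm : 0 < m) (hmF : ∀ v ∈ closure k, m * ‖v‖ ≤ F v)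
    (hsal : ∀ v ∈ closure k, -v ∈ closure K → v = 0) :
    ∀ v ∈ closure (coneThick k K c), -v ∈ closure (coneThick k K c) → v = 0 := by
  have hc1 : (0:ℝ) < c - 1 := by linarith
  intro v hv hv'
  rw [mem_closure_iff_seq_limit] at hv hv'
  obtain ⟨x, hx, hxlim⟩ := hv
  obtain ⟨x', hx', hxlim'⟩ := hv'
  choose p hp q hq hxeq hy using hx
  choose p' hp' q' hq' hxeq' hy' using hx'
  set P : ℕ → V := fun n => p n + p' n with hP
  set Q : ℕ → V := fun n => q n + q' n with hQ
  have hQk : ∀ n, Q n ∈ k := fun n => hkadd _ (hq n) _ (hq' n)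
  have hyPQ : ∀ n, P n - c • Q n ∈ K := by
    intro n
    have hadd := hKadd _ (hy n) _ (hy' n)
    have heq : p n - c • q n + (p' n - c • q' n) = P n - c • Q n := by
      rw [hP, hQ]
      module
    rwa [heq] at hadd
  have hrlim : Filter.Tendsto (fun n => P n - Q n) Filter.atTop (𝓝 0) := by
    have heq : (fun n => P n - Q n) = fun n => x n + x' n := by
      funext n
      rw [hP, hQ, hxeq n, hxeq' n]
      module
    rw [heq]
    simpa using hxlim.add hxlim'
  have hFr : Filter.Tendsto (fun n => F (P n - Q n)) Filter.atTop (𝓝 0) := by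
    have h := (F.continuous.tendsto 0).comp hrlim
    rw [map_zero] at h
    exact h
  have hFQ0 : ∀ n, 0 ≤ F (Q n) := fun n => hF0 _ (subset_closure (hsub (hQk n)))
  have hFQle : ∀ n, F (Q n) ≤ (c - 1)⁻¹ * F (P n - Q n) := by
    intro n
    have h1 : 0 ≤ F (P n - c • Q n) := hF0 _ (subset_closure (hyPQ n))
    have h2 : F (P n - c • Q n) = F (P n - Q n) - (c - 1) * F (Q n) := by
      have heq : P n - c • Q n = (P n - Q n) - (c - 1) • Q n := by module
      rw [heq, map_sub, map_smul, smul_eq_mul]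
    rw [h2] at h1
    have h3 : (c - 1) * F (Q n) ≤ F (P n - Q n) := by linarith
    calc F (Q n) = (c - 1)⁻¹ * ((c - 1) * F (Q n)) := by
          rw [← mul_assoc, inv_mul_cancel₀ hc1.ne', one_mul]
    _ ≤ (c - 1)⁻¹ * F (P n - Q n) := mul_le_mul_of_nonneg_left h3 (inv_pos.2 hc1).le
  have hFQlim : Filter.Tendsto (fun n => F (Q n)) Filter.atTop (𝓝 0) := by
    apply squeeze_zero hFQ0 hFQle
    have := hFr.const_mul (c - 1)⁻¹
    simpa using this
  have hnormle : ∀ (r : ℕ → V), (∀ n, r n ∈ k) → (∀ n, F (r n) ≤ F (Q n)) →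
      Filter.Tendsto r Filter.atTop (𝓝 0) := by
    intro r hr hrle
    apply squeeze_zero_norm (a := fun n => m⁻¹ * F (Q n))
    · intro n
      have h1 : m * ‖r n‖ ≤ F (r n) := hmF _ (subset_closure (hr n))
      calc ‖r n‖ = m⁻¹ * (m * ‖r n‖) := by
            rw [← mul_assoc, inv_mul_cancel₀ hm.ne', one_mul]
      _ ≤ m⁻¹ * F (Q n) := mul_le_mul_of_nonneg_left (le_trans h1 (hrle n)) (inv_pos.2 hm).le
    · have := hFQlim.const_mul m⁻¹
      simpa using this
  have hqlim : Filter.Tendsto q Filter.atTop (𝓝 0) := by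
    apply hnormle q hq
    intro n
    have h3 : 0 ≤ F (q' n) := hF0 _ (subset_closure (hsub (hq' n)))
    have heq : F (Q n) = F (q n) + F (q' n) := by rw [hQ]; exact map_add F _ _
    linarith
  have hq'lim : Filter.Tendsto q' Filter.atTop (𝓝 0) := by
    apply hnormle q' hq'
    intro n
    have h3 : 0 ≤ F (q n) := hF0 _ (subset_closure (hsub (hq n)))
    have heq : F (Q n) = F (q n) + F (q' n) := by rw [hQ]; exact map_add F _ _
    linarith
  have hplim : Filter.Tendsto p Filter.atTop (𝓝 v) := by
    have heq : p = fun n => x n + q n := funext fun n => by rw [hxeq n]; abel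
    rw [heq]
    simpa using hxlim.add hqlim
  have hp'lim : Filter.Tendsto p' Filter.atTop (𝓝 (-v)) := by
    have heq : p' = fun n => x' n + q' n := funext fun n => by rw [hxeq' n]; abel
    rw [heq]
    simpa using hxlim'.add hq'lim
  have hvclk : v ∈ closure k := mem_closure_of_tendsto hplim (Filter.Eventually.of_forall hp)
  have hvclk' : -v ∈ closure k := mem_closure_of_tendsto hp'lim (Filter.Eventually.of_forall hp')
  exact hsal v hvclk (closure_mono hsub hvclk')

theorem pgl_mk_smul (u : GLV V) (x : Projectivization ℝ V) :
    (QuotientGroup.mk u : PGL V) • x = u • x := by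
  show PGLperm V (QuotientGroup.mk u) x = u • x
  unfold PGLperm
  rfl

theorem neg_glv_smul (u : GLV V) (x : Projectivization ℝ V) :
    (-u : GLV V) • x = u • x := by
  induction x using Projectivization.ind with
  | h v hv =>
    rw [glv_smul_mk, glv_smul_mk]
    have heq : ((-u : GLV V) : V →L[ℝ] V) v = -((u : V →L[ℝ] V) v) := by
      rw [Units.val_neg]
      simp
    have hne : ((-u : GLV V) : V →L[ℝ] V) v ≠ 0 := GLV.ne_zero V (-u) hv
    rw [show Projectivization.mk ℝ (((-u : GLV V) : V →L[ℝ] V) v) hne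
        = Projectivization.mk ℝ (-((u : V →L[ℝ] V) v)) (heq ▸ hne) from by
      congr 1]
    exact mk_neg (GLV.ne_zero V u hv) _

theorem smul_coneProj (u : GLV V) (A : Set V) :
    (QuotientGroup.mk u : PGL V) • coneProj A
      = coneProj ((fun v => (u : V →L[ℝ] V) v) '' A) := by
  ext x
  rw [Set.mem_smul_set]
  constructor
  · rintro ⟨y, ⟨v, hv, hvA, rfl⟩, rfl⟩
    rw [pgl_mk_smul, glv_smul_mk]
    exact ⟨_, GLV.ne_zero V u hv, ⟨v, hvA, rfl⟩, rfl⟩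
  · rintro ⟨w, hw, ⟨v, hvA, rfl⟩, rfl⟩
    have hv : v ≠ 0 := by
      intro h
      rw [h] at hw
      simp at hw
    exact ⟨Projectivization.mk ℝ v hv, ⟨v, hv, hvA, rfl⟩, by rw [pgl_mk_smul, glv_smul_mk]⟩

theorem coneProj_neg (A : Set V) : coneProj (-A) = coneProj A := by
  ext x
  constructor
  · rintro ⟨v, hv, hvA, rfl⟩
    rw [Set.mem_neg] at hvA
    exact ⟨-v, neg_ne_zero.2 hv, hvA, (mk_neg hv (neg_ne_zero.2 hv)).symm⟩
  · rintro ⟨v, hv, hvA, rfl⟩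
    refine ⟨-v, neg_ne_zero.2 hv, ?_, (mk_neg hv (neg_ne_zero.2 hv)).symm⟩
    rw [Set.mem_neg, neg_neg]
    exact hvA

theorem closure_cone_smul {A : Set V} (hcone : ∀ a : ℝ, 0 < a → ∀ v ∈ A, a • v ∈ A) :
    ∀ a : ℝ, 0 < a → ∀ v ∈ closure A, a • v ∈ closure A := by
  intro a ha v hv
  have hmap := image_closure_subset_closure_image (f := fun x : V => a • x)
    (continuous_const_smul a) (s := A)
  have h2 : a • v ∈ closure ((fun x : V => a • x) '' A) := hmap ⟨v, hv, rfl⟩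
  refine closure_mono ?_ h2
  rintro x ⟨y, hy, rfl⟩
  exact hcone a ha y hy

theorem zero_mem_closure_cone {A : Set V} (hne : A.Nonempty)
    (hcone : ∀ a : ℝ, 0 < a → ∀ v ∈ A, a • v ∈ A) : (0:V) ∈ closure A := by
  obtain ⟨v, hv⟩ := hne
  have htend : Filter.Tendsto (fun n : ℕ => (1/((n:ℝ)+1)) • v) Filter.atTop (𝓝 (0:V)) := by
    simpa using (tendsto_one_div_add_atTop_nhds_zero_nat : Filter.Tendsto (fun n : ℕ => 1 / ((n : ℝ) + 1)) Filter.atTop (𝓝 0)).smul_const v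
  exact mem_closure_of_tendsto htend
    (Filter.Eventually.of_forall fun n => hcone _ (by positivity) v hv)

theorem inChart_ne {f : V →L[ℝ] ℝ} {S : Set (Projectivization ℝ V)} (hchart : InChart f S)
    {v : V} (hv : v ≠ 0) (hmem : Projectivization.mk ℝ v hv ∈ S) : f v ≠ 0 := by
  obtain ⟨a, ha, hr⟩ := exists_rep_smul hv
  have hne := hchart _ hmem
  rw [hr, map_smul, smul_eq_mul] at hne
  intro h0
  rw [h0, mul_zero] at hne
  exact hne rfl

theorem coneThick_isOpen {k K : Set V} {c : ℝ} (hkopen : IsOpen k) (hKopen : IsOpen K) :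
    IsOpen (coneThick k K c) := by
  have heq : coneThick k K c
      = ⋃ q ∈ k, ((fun x => x + q) ⁻¹' k ∩ (fun x => x + q - c • q) ⁻¹' K) := by
    ext x
    simp only [Set.mem_iUnion, Set.mem_inter_iff, Set.mem_preimage]
    constructor
    · rintro ⟨p, hp, q, hq, rfl, hy⟩
      refine ⟨q, hq, by rwa [show p - q + q = p from by abel], ?_⟩
      rwa [show p - q + q - c • q = p - c • q from by abel]
    · rintro ⟨q, hq, h1, h2⟩
      exact ⟨x + q, h1, q, hq, by abel, h2⟩
  rw [heq]
  exact isOpen_biUnion fun q hq =>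
    (hkopen.preimage (continuous_add_right q)).inter
      (hKopen.preimage ((continuous_add_right q).sub continuous_const))

theorem main_construction [FiniteDimensional ℝ V] (Ω 𝕆 : Set (Projectivization ℝ V))
    (hΩne : Ω.Nonempty) (h𝕆ne : 𝕆.Nonempty)
    (hΩo : IsOpen Ω) (h𝕆o : IsOpen 𝕆)
    (hΩcv : IsConvexSet Ω) (h𝕆cv : IsConvexSet 𝕆)
    (hsub : Ω ⊆ 𝕆)
    (hdisj : closure Ω ∩ dirSpace 𝕆 = ∅) :
    ∃ F : ℝ → Set (Projectivization ℝ V),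
      F 0 = Ω ∧
      (∀ t, 0 ≤ t → IsOpen (F t) ∧ IsProperlyConvex (F t) ∧ F t ⊆ 𝕆) ∧
      (⋃ t ∈ Set.Ici (0 : ℝ), F t) = 𝕆 ∧
      (∀ s t : ℝ, 0 ≤ s → s < t → F s ⊆ F t) ∧
      (∀ Γ : Subgroup (PGL V), SetPreserved Γ 𝕆 → SetPreserved Γ Ω →
        ∀ t, 0 ≤ t → SetPreserved Γ (F t)) := by
  classical
  obtain ⟨f, hchart𝕆, hconv𝕆⟩ := h𝕆cv
  obtain ⟨g, hchartΩ', hconvΩ'⟩ := hΩcv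
  set K : Set V := projCone f 𝕆 with hKdef
  set k : Set V := projCone f Ω with hkdef
  have hchartΩ : InChart f Ω := fun x hx => hchart𝕆 x (hsub hx)
  have hKcone : ∀ a : ℝ, 0 < a → ∀ v ∈ K, a • v ∈ K := fun a ha v hv =>
    projCone_smul_mem hv ha
  have hkcone : ∀ a : ℝ, 0 < a → ∀ v ∈ k, a • v ∈ k := fun a ha v hv =>
    projCone_smul_mem hv ha
  have hKconv : Convex ℝ K := projCone_convex f 𝕆 hchart𝕆 hconv𝕆
  have hksub : k ⊆ K := by
    rintro v ⟨h1, hv, h2⟩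
    exact ⟨h1, hv, hsub h2⟩
  -- convexity of k via the sign dichotomy in the chart g of Ω
  have hDconv : Convex ℝ (projCone g Ω) := projCone_convex g Ω hchartΩ' hconvΩ'
  have hfD : ∀ z ∈ projCone g Ω, f z ≠ 0 := by
    rintro z ⟨hgz, hz, hzΩ⟩
    exact inChart_ne hchartΩ hz hzΩ
  have hkconv : Convex ℝ k := by
    have hsplit : ∀ z ∈ k, z ∈ projCone g Ω ∨ -z ∈ projCone g Ω := by
      rintro z ⟨hfz, hz, hzΩ⟩
      have hgz : g z ≠ 0 := inChart_ne hchartΩ' hz hzΩ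
      rcases lt_or_gt_of_ne hgz with hneg | hpos
      · right
        refine ⟨by simpa using hneg, neg_ne_zero.2 hz, ?_⟩
        rw [mk_neg hz (neg_ne_zero.2 hz)]
        exact hzΩ
      · exact Or.inl ⟨hpos, hz, hzΩ⟩
    rintro v hv w hw a b ha hb hab
    have hfv := hv.1
    have hfw := hw.1
    have hfz : 0 < f (a • v + b • w) := by
      rw [map_add, map_smul, map_smul, smul_eq_mul, smul_eq_mul]
      rcases ha.lt_or_eq with h | h
      · exact add_pos_of_pos_of_nonneg (mul_pos h hfv) (mul_nonneg hb hfw.le)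
      · have hb1 : b = 1 := by linarith
        rw [← h, hb1]
        simpa using hfw
    have hzne : a • v + b • w ≠ 0 := by
      intro h0
      rw [h0] at hfz
      simp at hfz
    rcases hsplit v hv with h1 | h1 <;> rcases hsplit w hw with h2 | h2
    · have hcomb := hDconv h1 h2 ha hb hab
      obtain ⟨hne', hmem⟩ := hcomb.2
      exact ⟨hfz, hne', hmem⟩
    · exfalso
      have hs := sign_const hDconv f hfD h1 h2 (by
        have := hv.1
        rcases lt_or_gt_of_ne (hfD v h1) with hn | hp
        · linarith
        · exact hp)
      rw [map_neg] at hs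
      linarith
    · exfalso
      have hs := sign_const hDconv f hfD h2 h1 (by
        rcases lt_or_gt_of_ne (hfD w h2) with hn | hp
        · linarith
        · exact hp)
      rw [map_neg] at hs
      linarith
    · have hcomb := hDconv h1 h2 ha hb hab
      have heq : a • (-v) + b • (-w) = -(a • v + b • w) := by module
      rw [heq] at hcomb
      obtain ⟨hne', hmem⟩ := hcomb.2
      refine ⟨hfz, hzne, ?_⟩
      have hmk : Projectivization.mk ℝ (a • v + b • w) hzne
          = Projectivization.mk ℝ (-(a • v + b • w)) hne' := (mk_neg hzne hne').symm
      rw [hmk]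
      exact hmem
  -- nonemptiness
  have hΩeq : coneProj k = Ω := coneProj_projCone f Ω hchartΩ
  have h𝕆eq : coneProj K = 𝕆 := coneProj_projCone f 𝕆 hchart𝕆
  have hkne : k.Nonempty := by
    obtain ⟨x, hx⟩ := hΩne
    rw [← hΩeq] at hx
    obtain ⟨v, hv, hvk, _⟩ := hx
    exact ⟨v, hvk⟩
  have hKne : K.Nonempty := hkne.mono hksub
  have hkopen : IsOpen k := isOpen_projCone f hΩo
  have hKopen : IsOpen K := isOpen_projCone f h𝕆o
  have hkadd : ∀ p ∈ k, ∀ q ∈ k, p + q ∈ k := by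
    intro p hp q hq
    have h1 := hkconv hp hq (by norm_num : (0:ℝ) ≤ 1/2) (by norm_num : (0:ℝ) ≤ 1/2)
      (by norm_num : (1:ℝ)/2 + 1/2 = 1)
    have h2 := hkcone 2 (by norm_num) _ h1
    rw [smul_add, smul_smul, smul_smul] at h2
    norm_num at h2
    exact h2
  have hKadd : ∀ p ∈ K, ∀ q ∈ K, p + q ∈ K := by
    intro p hp q hq
    have h1 := hKconv hp hq (by norm_num : (0:ℝ) ≤ 1/2) (by norm_num : (0:ℝ) ≤ 1/2)
      (by norm_num : (1:ℝ)/2 + 1/2 = 1)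
    have h2 := hKcone 2 (by norm_num) _ h1
    rw [smul_add, smul_smul, smul_smul] at h2
    norm_num at h2
    exact h2
  -- the key salience input from `hdisj`
  have hbase : ∀ v ∈ closure k, -v ∈ closure K → v = 0 :=
    bridge_salient hchartΩ hKconv hksub hKne hdisj
  have hksal : ∀ v ∈ closure k, -v ∈ closure k → v = 0 := fun v hv hv' =>
    hbase v hv (closure_mono hksub hv')
  -- the dual functional
  obtain ⟨F₁, hF0, hFpos⟩ := cone_dual_exists hKconv.closure isClosed_closure
    (closure_cone_smul hKcone) (zero_mem_closure_cone hKne hKcone)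
    (closure_mono hksub) isClosed_closure (closure_cone_smul hkcone) hbase
  obtain ⟨m, hm, hmF⟩ := cone_dual_norm_bound isClosed_closure
    (closure_cone_smul hkcone) F₁ hFpos
  -- the family
  set Fam : ℝ → Set (Projectivization ℝ V) := fun t =>
    if t ≤ 0 then Ω else coneProj (coneThick k K (1 + t⁻¹)) with hFamdef
  have hFam0 : Fam 0 = Ω := if_pos le_rfl
  have hFamt : ∀ t : ℝ, 0 < t → Fam t = coneProj (coneThick k K (1 + t⁻¹)) :=
    fun t ht => if_neg (not_le.2 ht)
  have hct : ∀ t : ℝ, 0 < t → 1 < 1 + t⁻¹ := by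
    intro t ht
    have := inv_pos.2 ht
    linarith
  have hsalT : ∀ c : ℝ, 1 < c →
      ∀ v ∈ closure (coneThick k K c), -v ∈ closure (coneThick k K c) → v = 0 :=
    fun c hc => coneThick_salient hc hkadd hKadd hksub F₁ hF0 m hm hmF hbase
  have hsub𝕆 : ∀ t : ℝ, 0 ≤ t → Fam t ⊆ 𝕆 := by
    intro t ht
    rcases eq_or_lt_of_le ht with rfl | htpos
    · rw [hFam0]; exact hsub
    · rw [hFamt t htpos, ← h𝕆eq]
      exact coneProj_mono (coneThick_subset (hct t htpos) hKconv hksub)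
  refine ⟨Fam, hFam0, ?_, ?_, ?_, ?_⟩
  · -- open, properly convex, contained
    intro t ht
    refine ⟨?_, ?_, hsub𝕆 t ht⟩
    · rcases eq_or_lt_of_le ht with rfl | htpos
      · rw [hFam0]; exact hΩo
      · rw [hFamt t htpos]
        exact isOpen_coneProj (coneThick_isOpen hkopen hKopen)
          (fun a ha v hv => coneThick_smul hkcone hKcone ha hv)
    · rcases eq_or_lt_of_le ht with rfl | htpos
      · rw [hFam0, ← hΩeq]
        exact properlyConvex_of_cone hkconv hkcone hksal
      · rw [hFamt t htpos]
        exact properlyConvex_of_cone (coneThick_convex hkconv hKconv)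
          (fun a ha v hv => coneThick_smul hkcone hKcone ha hv)
          (hsalT _ (hct t htpos))
  · -- union
    apply subset_antisymm
    · intro x hx
      simp only [Set.mem_iUnion] at hx
      obtain ⟨t, ht, hxt⟩ := hx
      exact hsub𝕆 t ht hxt
    · intro x hx
      rw [← h𝕆eq] at hx
      obtain ⟨v, hv, hvK, rfl⟩ := hx
      obtain ⟨c, hc, hvc⟩ := coneThick_cover hkne hkopen hKopen hkcone v hvK
      set t : ℝ := (c - 1)⁻¹ with htdef
      have htpos : 0 < t := inv_pos.2 (by linarith)
      have hceq : 1 + t⁻¹ = c := by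
        rw [htdef, inv_inv]
        ring
      simp only [Set.mem_iUnion]
      refine ⟨t, htpos.le, ?_⟩
      rw [hFamt t htpos, hceq]
      exact mem_coneProj_of_mem hv hvc
  · -- monotone
    intro s t hs hst
    have htpos : 0 < t := lt_of_le_of_lt hs hst
    rcases eq_or_lt_of_le hs with rfl | hspos
    · rw [hFam0, hFamt t htpos, ← hΩeq]
      exact coneProj_mono (subset_coneThick (hct t htpos) hkcone hksub)
    · rw [hFamt s hspos, hFamt t htpos]
      apply coneProj_mono
      apply coneThick_mono (hct t htpos) ?_ hKconv hksub
      have h1 : t⁻¹ ≤ s⁻¹ := by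
        apply inv_anti₀ hspos hst.le
      linarith
  · -- invariance
    intro Γ hΓ𝕆 hΓΩ t ht γ hγ
    rcases eq_or_lt_of_le ht with rfl | htpos
    · rw [hFam0]; exact hΓΩ γ hγ
    rw [hFamt t htpos]
    set c : ℝ := 1 + t⁻¹ with hcdef
    have hc : 1 < c := hct t htpos
    obtain ⟨u₀, hu₀⟩ := QuotientGroup.mk'_surjective (projScalars V) γ
    rw [QuotientGroup.mk'_apply] at hu₀
    subst hu₀
    -- membership transfer for any unit whose class is in Γ
    have hiff : ∀ (S : Set (Projectivization ℝ V)), SetPreserved Γ S →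
        ∀ (w : GLV V), (QuotientGroup.mk w : PGL V) ∈ Γ →
        ∀ (v : V) (hv : v ≠ 0),
        (Projectivization.mk ℝ v hv ∈ S ↔
          Projectivization.mk ℝ ((w : V →L[ℝ] V) v) (GLV.ne_zero V w hv) ∈ S) := by
      intro S hS w hw v hv
      have hset := hS _ hw
      have heq : (QuotientGroup.mk w : PGL V) • Projectivization.mk ℝ v hv
          = Projectivization.mk ℝ ((w : V →L[ℝ] V) v) (GLV.ne_zero V w hv) := by
        rw [pgl_mk_smul, glv_smul_mk]
      constructor
      · intro hmem
        have h2 : (QuotientGroup.mk w : PGL V) • Projectivization.mk ℝ v hv ∈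
            (QuotientGroup.mk w : PGL V) • S := Set.smul_mem_smul_set hmem
        rw [hset, heq] at h2
        exact h2
      · intro hmem
        rw [← heq, ← hset, Set.mem_smul_set] at hmem
        obtain ⟨y, hy, hyeq⟩ := hmem
        have h3 := MulAction.injective (α := PGL V) (QuotientGroup.mk w) hyeq
        rwa [← h3]
    have hγinv : (QuotientGroup.mk (u₀⁻¹) : PGL V) ∈ Γ := by
      rw [show (QuotientGroup.mk (u₀⁻¹) : PGL V) = (QuotientGroup.mk u₀ : PGL V)⁻¹ from rfl]
      exact inv_mem hγ
    obtain ⟨v₀, hv₀⟩ := hkne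
    have hv₀ne : v₀ ≠ 0 := projCone_ne_zero hv₀
    -- the generic image argument
    have main : ∀ (M M' : V →L[ℝ] V),
        (∀ v, M (M' v) = v) → (∀ v, M' (M v) = v) →
        (∀ (v : V) (hv : v ≠ 0) (hMv : M v ≠ 0),
          (Projectivization.mk ℝ v hv ∈ Ω ↔ Projectivization.mk ℝ (M v) hMv ∈ Ω)) →
        (∀ (v : V) (hv : v ≠ 0) (hMv : M v ≠ 0),
          (Projectivization.mk ℝ v hv ∈ 𝕆 ↔ Projectivization.mk ℝ (M v) hMv ∈ 𝕆)) →
        (∀ (v : V) (hv : v ≠ 0) (hMv : M' v ≠ 0),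
          (Projectivization.mk ℝ v hv ∈ Ω ↔ Projectivization.mk ℝ (M' v) hMv ∈ Ω)) →
        (∀ (v : V) (hv : v ≠ 0) (hMv : M' v ≠ 0),
          (Projectivization.mk ℝ v hv ∈ 𝕆 ↔ Projectivization.mk ℝ (M' v) hMv ∈ 𝕆)) →
        0 < f (M v₀) →
        (fun v => M v) '' coneThick k K c = coneThick k K c := by
      intro M M' hMM' hM'M hiffΩ hiff𝕆 hiffΩ' hiff𝕆' hsign
      have hMne : ∀ v : V, v ≠ 0 → M v ≠ 0 := by
        intro v hv h0
        apply hv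
        rw [← hM'M v, h0, map_zero]
      have hM'ne : ∀ v : V, v ≠ 0 → M' v ≠ 0 := by
        intro v hv h0
        apply hv
        rw [← hMM' v, h0, map_zero]
      have hMk : ∀ v ∈ k, M v ∈ k := by
        rintro v hvk
        obtain ⟨hfv, hv, hvΩ⟩ := hvk
        have hMvne := hMne v hv
        have hmkMv : Projectivization.mk ℝ (M v) hMvne ∈ Ω := (hiffΩ v hv hMvne).1 hvΩ
        refine ⟨?_, hMvne, hmkMv⟩
        -- sign via sign_const on k with f.comp M
        have hgne : ∀ z ∈ k, (f.comp M) z ≠ 0 := by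
          rintro z ⟨hfz, hz, hzΩ⟩
          have hMzne := hMne z hz
          have : Projectivization.mk ℝ (M z) hMzne ∈ 𝕆 := (hiff𝕆 z hz hMzne).1 (hsub hzΩ)
          simpa using inChart_ne hchart𝕆 hMzne this
        have := sign_const hkconv (f.comp M) hgne hv₀ ⟨hfv, hv, hvΩ⟩ (by simpa using hsign)
        simpa using this
      have hMK : ∀ v ∈ K, M v ∈ K := by
        rintro v hvK
        obtain ⟨hfv, hv, hv𝕆⟩ := hvK
        have hMvne := hMne v hv
        have hmkMv : Projectivization.mk ℝ (M v) hMvne ∈ 𝕆 := (hiff𝕆 v hv hMvne).1 hv𝕆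
        refine ⟨?_, hMvne, hmkMv⟩
        have hgne : ∀ z ∈ K, (f.comp M) z ≠ 0 := by
          rintro z ⟨hfz, hz, hz𝕆⟩
          have hMzne := hMne z hz
          have : Projectivization.mk ℝ (M z) hMzne ∈ 𝕆 := (hiff𝕆 z hz hMzne).1 hz𝕆
          simpa using inChart_ne hchart𝕆 hMzne this
        have := sign_const hKconv (f.comp M) hgne (hksub hv₀) ⟨hfv, hv, hv𝕆⟩
          (by simpa using hsign)
        simpa using this
      have hM'k : ∀ v ∈ k, M' v ∈ k := by
        rintro v hvk
        obtain ⟨hfv, hv, hvΩ⟩ := hvk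
        have hM'vne := hM'ne v hv
        have hmkM'v : Projectivization.mk ℝ (M' v) hM'vne ∈ Ω := (hiffΩ' v hv hM'vne).1 hvΩ
        have hfM'v : f (M' v) ≠ 0 := inChart_ne hchartΩ hM'vne hmkM'v
        rcases lt_or_gt_of_ne hfM'v with hneg | hpos
        · exfalso
          have hnegk : -(M' v) ∈ k := by
            refine ⟨by simpa using hneg, neg_ne_zero.2 hM'vne, ?_⟩
            rw [mk_neg hM'vne (neg_ne_zero.2 hM'vne)]
            exact hmkM'v
          have := hMk _ hnegk
          rw [map_neg, hMM'] at this
          obtain ⟨hcontra, _, _⟩ := this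
          rw [map_neg] at hcontra
          linarith
        · exact ⟨hpos, hM'vne, hmkM'v⟩
      have hM'K : ∀ v ∈ K, M' v ∈ K := by
        rintro v hvK
        obtain ⟨hfv, hv, hv𝕆⟩ := hvK
        have hM'vne := hM'ne v hv
        have hmkM'v : Projectivization.mk ℝ (M' v) hM'vne ∈ 𝕆 := (hiff𝕆' v hv hM'vne).1 hv𝕆
        have hfM'v : f (M' v) ≠ 0 := inChart_ne hchart𝕆 hM'vne hmkM'v
        rcases lt_or_gt_of_ne hfM'v with hneg | hpos
        · exfalso
          have hnegK : -(M' v) ∈ K := by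
            refine ⟨by simpa using hneg, neg_ne_zero.2 hM'vne, ?_⟩
            rw [mk_neg hM'vne (neg_ne_zero.2 hM'vne)]
            exact hmkM'v
          have := hMK _ hnegK
          rw [map_neg, hMM'] at this
          obtain ⟨hcontra, _, _⟩ := this
          rw [map_neg] at hcontra
          linarith
        · exact ⟨hpos, hM'vne, hmkM'v⟩
      apply subset_antisymm
      · rintro _ ⟨x, ⟨p, hp, q, hq, rfl, hy⟩, rfl⟩
        show M (p - q) ∈ coneThick k K c
        refine ⟨M p, hMk p hp, M q, hMk q hq, by rw [map_sub], ?_⟩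
        have heq : M (p - c • q) = M p - c • M q := by rw [map_sub, map_smul]
        rw [← heq]
        exact hMK _ hy
      · rintro x ⟨p, hp, q, hq, rfl, hy⟩
        refine ⟨M' (p - q), ?_, hMM' _⟩
        refine ⟨M' p, hM'k p hp, M' q, hM'k q hq, by rw [map_sub], ?_⟩
        have heq : M' (p - c • q) = M' p - c • M' q := by rw [map_sub, map_smul]
        rw [← heq]
        exact hM'K _ hy
    -- apply with the correct sign
    set M₀ : V →L[ℝ] V := (u₀ : V →L[ℝ] V) with hM₀def
    set M₀' : V →L[ℝ] V := ((u₀⁻¹ : GLV V) : V →L[ℝ] V) with hM₀'def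
    have hid1 : ∀ v, M₀ (M₀' v) = v := by
      intro v
      rw [hM₀def, hM₀'def, ← ContinuousLinearMap.mul_apply, ← Units.val_mul, mul_inv_cancel]
      simp
    have hid2 : ∀ v, M₀' (M₀ v) = v := by
      intro v
      rw [hM₀def, hM₀'def, ← ContinuousLinearMap.mul_apply, ← Units.val_mul, inv_mul_cancel]
      simp
    have hiffΩ₀ := fun (v : V) (hv : v ≠ 0) => hiff Ω hΓΩ u₀ hγ v hv
    have hiff𝕆₀ := fun (v : V) (hv : v ≠ 0) => hiff 𝕆 hΓ𝕆 u₀ hγ v hv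
    have hiffΩ₀' := fun (v : V) (hv : v ≠ 0) => hiff Ω hΓΩ u₀⁻¹ hγinv v hv
    have hiff𝕆₀' := fun (v : V) (hv : v ≠ 0) => hiff 𝕆 hΓ𝕆 u₀⁻¹ hγinv v hv
    have hM₀v₀ne : M₀ v₀ ≠ 0 := GLV.ne_zero V u₀ hv₀ne
    have hfM₀v₀ : f (M₀ v₀) ≠ 0 := by
      apply inChart_ne hchart𝕆 hM₀v₀ne
      obtain ⟨hfv₀p, hv₀ne2, hv₀Ω⟩ := hv₀
      exact (hiff𝕆₀ v₀ hv₀ne).1 (hsub hv₀Ω)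
    rcases lt_or_gt_of_ne hfM₀v₀ with hneg | hpos
    · -- use -M₀
      have hmain := main (-M₀) (-M₀')
        (fun v => by simp [hid1 v]) (fun v => by simp [hid2 v])
        (fun v hv hMv => by
          have h1 : (-M₀) v = -(M₀ v) := by simp
          have hM₀vne : M₀ v ≠ 0 := by
            intro h0
            apply hMv
            rw [h1, h0, neg_zero]
          have h2 : Projectivization.mk ℝ ((-M₀) v) hMv
              = Projectivization.mk ℝ (M₀ v) hM₀vne := by
            rw [show Projectivization.mk ℝ ((-M₀) v) hMv
                = Projectivization.mk ℝ (-(M₀ v)) (h1 ▸ hMv) from by congr 1]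
            exact mk_neg hM₀vne _
          rw [h2]
          exact hiffΩ₀ v hv)
        (fun v hv hMv => by
          have h1 : (-M₀) v = -(M₀ v) := by simp
          have hM₀vne : M₀ v ≠ 0 := by
            intro h0
            apply hMv
            rw [h1, h0, neg_zero]
          have h2 : Projectivization.mk ℝ ((-M₀) v) hMv
              = Projectivization.mk ℝ (M₀ v) hM₀vne := by
            rw [show Projectivization.mk ℝ ((-M₀) v) hMv
                = Projectivization.mk ℝ (-(M₀ v)) (h1 ▸ hMv) from by congr 1]
            exact mk_neg hM₀vne _
          rw [h2]
          exact hiff𝕆₀ v hv)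
        (fun v hv hMv => by
          have h1 : (-M₀') v = -(M₀' v) := by simp
          have hM₀vne : M₀' v ≠ 0 := by
            intro h0
            apply hMv
            rw [h1, h0, neg_zero]
          have h2 : Projectivization.mk ℝ ((-M₀') v) hMv
              = Projectivization.mk ℝ (M₀' v) hM₀vne := by
            rw [show Projectivization.mk ℝ ((-M₀') v) hMv
                = Projectivization.mk ℝ (-(M₀' v)) (h1 ▸ hMv) from by congr 1]
            exact mk_neg hM₀vne _
          rw [h2]
          exact hiffΩ₀' v hv)
        (fun v hv hMv => by
          have h1 : (-M₀') v = -(M₀' v) := by simp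
          have hM₀vne : M₀' v ≠ 0 := by
            intro h0
            apply hMv
            rw [h1, h0, neg_zero]
          have h2 : Projectivization.mk ℝ ((-M₀') v) hMv
              = Projectivization.mk ℝ (M₀' v) hM₀vne := by
            rw [show Projectivization.mk ℝ ((-M₀') v) hMv
                = Projectivization.mk ℝ (-(M₀' v)) (h1 ▸ hMv) from by congr 1]
            exact mk_neg hM₀vne _
          rw [h2]
          exact hiff𝕆₀' v hv)
        (by simpa using hneg)
      -- γ • coneProj (coneThick) = coneProj (M₀ '' coneThick) = coneProj (-(coneThick)) = ...
      rw [smul_coneProj]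
      have himg : (fun v => (u₀ : V →L[ℝ] V) v) '' coneThick k K c
          = -((fun v => (-M₀) v) '' coneThick k K c) := by
        ext y
        rw [Set.mem_neg]
        constructor
        · rintro ⟨x, hx, rfl⟩
          exact ⟨x, hx, by simp [hM₀def]⟩
        · rintro ⟨x, hx, hxy⟩
          refine ⟨x, hx, ?_⟩
          have : (-M₀) x = -y := hxy
          rw [hM₀def] at *
          have h4 : -((u₀ : V →L[ℝ] V) x) = -y := by simpa using this
          exact neg_injective h4
      rw [himg, hmain, coneProj_neg]
    · -- use M₀
      have hmain := main M₀ M₀' hid1 hid2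
        (fun v hv hMv => hiffΩ₀ v hv) (fun v hv hMv => hiff𝕆₀ v hv)
        (fun v hv hMv => hiffΩ₀' v hv) (fun v hv hMv => hiff𝕆₀' v hv) hpos
      rw [smul_coneProj]
      have hfin : (fun v => (u₀ : V →L[ℝ] V) v) '' coneThick k K c = coneThick k K c := hmain
      rw [hfin]

end AuxProof

/-- **Thickening inside a non-properly-convex ambient convex set** (Proposition 4.4 of
Danciger–Guéritaud–Kassel). -/
theorem thickening_non_proper
    (V : Type) [NormedAddCommGroup V] [NormedSpace ℝ V] [FiniteDimensional ℝ V]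
    (Ω 𝕆 : Set (Projectivization ℝ V))
    (hΩne : Ω.Nonempty) (h𝕆ne : 𝕆.Nonempty)
    (hΩo : IsOpen Ω) (h𝕆o : IsOpen 𝕆)
    (hΩcv : IsConvexSet Ω) (h𝕆cv : IsConvexSet 𝕆)
    (hsub : Ω ⊆ 𝕆)
    (hdisj : closure Ω ∩ dirSpace 𝕆 = ∅) :
    -- there is a nested exhausting family of properly convex open subsets of `𝕆`
    -- starting at `Ω`:
    (∃ F : ℝ → Set (Projectivization ℝ V),
      F 0 = Ω ∧
      (∀ t, 0 ≤ t → IsOpen (F t) ∧ IsProperlyConvex (F t) ∧ F t ⊆ 𝕆) ∧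
      (⋃ t ∈ Set.Ici (0 : ℝ), F t) = 𝕆 ∧
      (∀ s t : ℝ, 0 ≤ s → s < t → F s ⊆ F t)) ∧
    -- furthermore the family may be chosen invariant under any subgroup of `PGL(V)`
    -- preserving both `𝕆` and `Ω`:
    (∀ Γ : Subgroup (PGL V), SetPreserved Γ 𝕆 → SetPreserved Γ Ω →
      ∃ F : ℝ → Set (Projectivization ℝ V),
        F 0 = Ω ∧
        (∀ t, 0 ≤ t → IsOpen (F t) ∧ IsProperlyConvex (F t) ∧ F t ⊆ 𝕆) ∧
        (⋃ t ∈ Set.Ici (0 : ℝ), F t) = 𝕆 ∧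
        (∀ s t : ℝ, 0 ≤ s → s < t → F s ⊆ F t) ∧
        (∀ t, 0 ≤ t → SetPreserved Γ (F t))) := by
  obtain ⟨F, h0, hprops, hunion, hmono, hinv⟩ :=
    main_construction Ω 𝕆 hΩne h𝕆ne hΩo h𝕆o hΩcv h𝕆cv hsub hdisj
  exact ⟨⟨F, h0, hprops, hunion, hmono⟩,
    fun Γ h1 h2 => ⟨F, h0, hprops, hunion, hmono, hinv Γ h1 h2⟩⟩

end ProjectiveCombination
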